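/- arXiv:1503.00383 — 8 statements merged into one kernel-verified Lean document; each statement's English description precedes it below -/
import Mathlib

section
/- If θ is a one-form on V with dθ = ω and g*θ = θ for every g ∈ Sp(V, Ω), then θ = θ⁰, where θ⁰_z(v) = (1/2)Ω(z, v). (Uniqueness of the Sp(V,Ω)-invariant symplectic potential.) -/
/-- A linear symplectic automorphism of (V, Ω). -/
def IsLinSymp {V : Type*} [NormedAddCommGroup V] [NormedSpace ℝ V]
    (Ω : V →L[ℝ] V →L[ℝ] ℝ) (g : V →ₗ[ℝ] V) : Prop :=
  Function.Bijective g ∧ ∀ x y, Ω (g x) (g y) = Ω x y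

set_option maxHeartbeats 1000000 in
/-- uniqueness of the Sp(V,Ω)-invariant symplectic potential:
if θ is a smooth one-form with dθ = ω which is invariant under every linear
symplectic automorphism, then θ = θ⁰, i.e. θ_z(v) = (1/2)Ω(z,v). -/
theorem stmt2 {V : Type*} [NormedAddCommGroup V] [NormedSpace ℝ V]
    [FiniteDimensional ℝ V]
    (hdim : 2 ≤ Module.finrank ℝ V)
    (Ω : V →L[ℝ] V →L[ℝ] ℝ)
    (halt : ∀ x, Ω x x = 0)
    (hnd : ∀ x, (∀ y, Ω x y = 0) → x = 0)
    (θ : V → V →L[ℝ] ℝ) (hθ : ContDiff ℝ (⊤ : ℕ∞) θ)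
    (hdθ : ∀ z x y : V, fderiv ℝ θ z x y - fderiv ℝ θ z y x = Ω x y)
    (hinv : ∀ g : V →ₗ[ℝ] V, IsLinSymp Ω g → ∀ z v : V, θ (g z) (g v) = θ z v) :
    ∀ z v : V, θ z v = ((1 : ℝ)/2) * Ω z v := by
  -- antisymmetry of Ω
  have hanti : ∀ x y : V, Ω y x = - Ω x y := by
    intro x y
    have h := halt (x + y)
    simp only [map_add, ContinuousLinearMap.add_apply] at h
    rw [halt, halt] at h
    linarith
  -- the difference one-form α := θ - ½ Ω
  set α : V → V →L[ℝ] ℝ := fun w => θ w - (2⁻¹ : ℝ) • Ω w with hαdef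
  have hαapp : ∀ w x, α w x = θ w x - 2⁻¹ * Ω w x := fun w x => rfl
  -- α is invariant under all linear symplectomorphisms
  have hαinv : ∀ g : V →ₗ[ℝ] V, IsLinSymp Ω g → ∀ w x, α (g w) (g x) = α w x := by
    intro g hg w x
    simp only [hαapp, hinv g hg, hg.2]
  -- transvections
  set T : V → ℝ → (V →ₗ[ℝ] V) :=
    fun y c => LinearMap.id + c • ((Ω y).toLinearMap.smulRight y) with hTdef
  have hTapp : ∀ y c x, T y c x = x + (c * Ω y x) • y := by
    intro y c x
    simp [hTdef, LinearMap.smulRight_apply, smul_smul]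
  have hTsymp : ∀ (y : V) (c : ℝ), IsLinSymp Ω (T y c) := by
    intro y c
    have hinvol : ∀ (c : ℝ) (x : V), T y (-c) (T y c x) = x := by
      intro c x
      rw [hTapp, hTapp]
      have hy : Ω y (x + (c * Ω y x) • y) = Ω y x := by
        rw [map_add, map_smul, halt, smul_eq_mul, mul_zero, add_zero]
      rw [hy, neg_mul, neg_smul]
      abel
    constructor
    · rw [Function.bijective_iff_has_inverse]
      refine ⟨T y (-c), fun x => hinvol c x, fun x => ?_⟩
      have := hinvol (-c) x
      rwa [neg_neg] at this
    · intro x x'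
      simp only [hTapp, map_add, map_smul, ContinuousLinearMap.add_apply,
        ContinuousLinearMap.smul_apply, smul_eq_mul, halt]
      rw [hanti y x]
      ring
  -- α vanishes at the origin
  have hα0 : ∀ x, α 0 x = 0 := by
    intro x
    have hnegs : IsLinSymp Ω (-LinearMap.id) := by
      constructor
      · exact ⟨fun a b h => by simpa using neg_injective h, fun a => ⟨-a, by simp⟩⟩
      · intro a b; simp
    have h := hαinv _ hnegs 0 x
    simp only [LinearMap.neg_apply, LinearMap.id_apply, neg_zero, map_neg] at h
    linarith
  -- Key fact: α w vanishes on the Ω-orthocomplement of w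
  have hK : ∀ w x : V, Ω w x = 0 → α w x = 0 := by
    intro w x hwx
    rcases eq_or_ne x 0 with rfl | hx
    · simp
    · obtain ⟨v₀, hv₀⟩ : ∃ v₀, Ω x v₀ ≠ 0 := by
        by_contra h; push_neg at h; exact hx (hnd x h)
      have hg := hαinv (T x 1) (hTsymp x 1) w v₀
      have hxw : Ω x w = 0 := by rw [hanti w x, hwx, neg_zero]
      rw [hTapp, hTapp, hxw] at hg
      simp only [mul_zero, zero_smul, add_zero, one_mul, map_add, map_smul,
        smul_eq_mul] at hg
      have : Ω x v₀ * α w x = 0 := by linarith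
      rcases mul_eq_zero.mp this with h | h
      · exact absurd h hv₀
      · exact h
  -- decomposition along a non-orthogonal direction
  have hdec : ∀ w x y : V, Ω w y ≠ 0 → α w x = (Ω w x / Ω w y) * α w y := by
    intro w x y hwy
    have h0 : Ω w (x - (Ω w x / Ω w y) • y) = 0 := by
      simp only [map_sub, map_smul, smul_eq_mul]
      field_simp
      ring
    have h := hK w _ h0
    simp only [map_sub, map_smul, smul_eq_mul] at h
    linarith
  -- smoothness of α and its derivative
  have hΩsm : ContDiff ℝ (⊤ : ℕ∞) (fun w => ((2⁻¹ : ℝ) • Ω) w) :=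
    ContinuousLinearMap.contDiff _
  have hαsm : ContDiff ℝ (⊤ : ℕ∞) α := by
    have : α = fun w => θ w - ((2⁻¹ : ℝ) • Ω) w := by
      funext w; simp [hαdef]
    rw [this]; exact hθ.sub hΩsm
  set B : V → (V →L[ℝ] V →L[ℝ] ℝ) := fun w => fderiv ℝ θ w - (2⁻¹ : ℝ) • Ω with hBdef
  have hDα : ∀ w, HasFDerivAt α (B w) w := by
    intro w
    have h1 : HasFDerivAt θ (fderiv ℝ θ w) w :=
      (hθ.differentiable (by simp) w).hasFDerivAt
    have h2 : HasFDerivAt (fun w => ((2⁻¹ : ℝ) • Ω) w) ((2⁻¹ : ℝ) • Ω) w :=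
      ((2⁻¹ : ℝ) • Ω).hasFDerivAt
    exact h1.sub h2
  -- dα = 0 : B w is symmetric
  have hsym : ∀ w x y : V, B w x y = B w y x := by
    intro w x y
    have h1 := hdθ w x y
    have h2 := hanti x y
    simp only [hBdef, ContinuousLinearMap.sub_apply, ContinuousLinearMap.smul_apply,
      smul_eq_mul]
    linarith
  -- main argument
  intro z v
  rcases eq_or_ne z 0 with rfl | hz
  · have := hα0 v
    rw [hαapp] at this
    have h0 : Ω (0 : V) v = 0 := by simp
    rw [h0] at this ⊢
    linarith
  · obtain ⟨v₀, hv₀⟩ : ∃ v₀, Ω z v₀ ≠ 0 := by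
      by_contra h; push_neg at h; exact hz (hnd z h)
    set u : V := (Ω z v₀)⁻¹ • v₀ with hudef
    have hzu : Ω z u = 1 := by
      simp [hudef, map_smul, smul_eq_mul]
      field_simp
    set φ : ℝ → ℝ := fun t => α (t • z) u with hφdef
    -- derivative of φ
    have hφd : ∀ t : ℝ, HasDerivAt φ (B (t • z) z u) t := by
      intro t
      have hc : HasDerivAt (fun t : ℝ => t • z) z t := by
        simpa using (hasDerivAt_id t).smul_const z
      have h1 : HasDerivAt (fun t : ℝ => α (t • z)) (B (t • z) z) t :=
        (hDα (t • z)).comp_hasDerivAt t hc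
      simpa using h1.clm_apply (hasDerivAt_const t u)
    -- the ODE  t φ' + φ = 0  for t ≠ 0
    have hODE : ∀ t : ℝ, t ≠ 0 → B (t • z) z u = (-1 / t) * φ t := by
      intro t ht
      -- the curve s ↦ α (t•z + s•u) z
      have hc2 : HasDerivAt (fun s : ℝ => t • z + s • u) u 0 := by
        simpa using ((hasDerivAt_id (0 : ℝ)).smul_const u).const_add (t • z)
      have h00 : t • z + (0 : ℝ) • u = t • z := by simp
      have h1 : HasDerivAt (fun s : ℝ => α (t • z + s • u)) (B (t • z) u) 0 := by
        have h1' : HasDerivAt (fun s : ℝ => α (t • z + s • u))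
            (B (t • z + (0 : ℝ) • u) u) 0 := (hDα _).comp_hasDerivAt 0 hc2
        rwa [h00] at h1'
      have hψd : HasDerivAt (fun s : ℝ => α (t • z + s • u) z) (B (t • z) u z) 0 := by
        simpa using h1.clm_apply (hasDerivAt_const (0 : ℝ) z)
      -- χ and the representation
      have hχd : HasDerivAt (fun s : ℝ => α (t • z + s • u) u) (B (t • z) u u) 0 := by
        simpa using h1.clm_apply (hasDerivAt_const (0 : ℝ) u)
      have hrep : ∀ s : ℝ, α (t • z + s • u) z
          = (-1 / t) * (s * α (t • z + s • u) u) := by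
        intro s
        have hwu : Ω (t • z + s • u) u = t := by
          simp [map_add, map_smul, smul_eq_mul, halt, hzu]
        have hwz : Ω (t • z + s • u) z = -s := by
          have huz : Ω u z = -1 := by rw [hanti z u, hzu]
          simp [map_add, map_smul, smul_eq_mul, halt, huz]
        have := hdec (t • z + s • u) z u (by rw [hwu]; exact ht)
        rw [hwu, hwz] at this
        rw [this]; field_simp
      -- derivative of the representation at 0
      have h2 : HasDerivAt (fun s : ℝ => (-1 / t) * (s * α (t • z + s • u) u))
          ((-1 / t) * φ t) 0 := by
        have hmul : HasDerivAt (fun s : ℝ => s * α (t • z + s • u) u)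
            (1 * α (t • z + (0:ℝ) • u) u + 0 * B (t • z) u u) 0 :=
          (hasDerivAt_id (0 : ℝ)).mul hχd
        have := hmul.const_mul (-1 / t)
        simp only [h00, one_mul, zero_mul, add_zero] at this
        exact this
      have heq : (fun s : ℝ => α (t • z + s • u) z)
          = (fun s : ℝ => (-1 / t) * (s * α (t • z + s • u) u)) := funext hrep
      rw [heq] at hψd
      have huniq := hψd.unique h2
      rw [hsym]
      exact huniq
    -- g(t) = t * φ(t) has zero derivative everywhere
    have hg : ∀ t : ℝ, HasDerivAt (fun t => t * φ t) 0 t := by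
      intro t
      have h := (hasDerivAt_id t).mul (hφd t)
      rcases eq_or_ne t 0 with rfl | ht
      · have hφ0 : φ 0 = 0 := by
          simp only [hφdef, zero_smul]; exact hα0 u
        exact h.congr_deriv (by simp [hφ0])
      · rw [hODE t ht] at h
        have h2 : (1 : ℝ) * φ t + id t * ((-1 / t) * φ t) = 0 := by
          simp only [id_eq]; field_simp; ring
        rw [h2] at h
        exact h
    have hconst := is_const_of_deriv_eq_zero
      (f := fun t : ℝ => t * φ t)
      (fun t => (hg t).differentiableAt) (fun t => (hg t).deriv) 1 0
    have hφ1 : φ 1 = 0 := by simpa using hconst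
    have hαzu : α z u = 0 := by
      have : α ((1 : ℝ) • z) u = 0 := hφ1
      simpa using this
    have hfin := hdec z v u (by rw [hzu]; exact one_ne_zero)
    rw [hαzu, mul_zero, hαapp] at hfin
    linarith
end

section
/- A smooth map g : V → V satisfies g*θ⁰ = θ⁰ if and only if g is a linear symplectic automorphism, i.e., g ∈ Sp(V, Ω). In particular Aut(V, θ⁰) = Sp(V, Ω). -/
/-- a smooth map g satisfies g*θ⁰ = θ⁰ iff g is a linear
symplectic automorphism; thus Aut(V, θ⁰) = Sp(V, Ω). -/
theorem stmt7 {V : Type*} [NormedAddCommGroup V] [NormedSpace ℝ V]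
    [FiniteDimensional ℝ V]
    (Ω : V →L[ℝ] V →L[ℝ] ℝ)
    (halt : ∀ x, Ω x x = 0)
    (hnd : ∀ x, (∀ y, Ω x y = 0) → x = 0)
    (g : V → V) (hg : ContDiff ℝ (⊤ : ℕ∞) g) :
    (∀ z v : V, Ω (g z) (fderiv ℝ g z v) = Ω z v) ↔
      ∃ γ : V →ₗ[ℝ] V, IsLinSymp Ω γ ∧ ∀ z, g z = γ z := by
  -- antisymmetry of Ω
  have hskew : ∀ x y, Ω x y = - Ω y x := by
    intro x y
    have h := halt (x + y)
    simp only [map_add, ContinuousLinearMap.add_apply, halt] at h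
    linarith
  constructor
  · intro H
    set f' : V → V →L[ℝ] V := fderiv ℝ g with hf'def
    have hg' : ∀ z, HasFDerivAt g (f' z) z := fun z =>
      (hg.differentiable (by simp) z).hasFDerivAt
    have hgd : ContDiff ℝ (⊤ : ℕ∞) f' := hg.fderiv_right (by simp)
    set f'' : V → V →L[ℝ] V →L[ℝ] V := fderiv ℝ f' with hf''def
    have hf'' : ∀ z, HasFDerivAt f' (f'' z) z := fun z =>
      (hgd.differentiable (by simp) z).hasFDerivAt
    -- key differentiated identity
    have key : ∀ z v w, Ω (g z) (f'' z w v) + Ω (f' z w) (f' z v) = Ω w v := by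
      intro z v w
      -- c z = Ω (g z)
      have hc : HasFDerivAt (fun z => Ω (g z)) (Ω.comp (f' z)) z :=
        (Ω.hasFDerivAt).comp z (hg' z)
      -- u z = f' z v
      have hu : HasFDerivAt (fun z => f' z v)
          ((f' z).comp (0 : V →L[ℝ] V) + (f'' z).flip v) z :=
        (hf'' z).clm_apply (hasFDerivAt_const v z)
      have hF : HasFDerivAt (fun z => Ω (g z) (f' z v))
          ((Ω (g z)).comp ((f' z).comp (0 : V →L[ℝ] V) + (f'' z).flip v)
            + (Ω.comp (f' z)).flip (f' z v)) z := hc.clm_apply hu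
      have hF' : HasFDerivAt (fun z => Ω (g z) (f' z v))
          (Ω.flip v) z := by
        have : (fun z => Ω (g z) (f' z v)) = fun z => (Ω.flip v) z := by
          funext z; simpa using H z v
        rw [this]; exact (Ω.flip v).hasFDerivAt
      have := hF.unique hF'
      have happ := congrArg (fun (T : V →L[ℝ] ℝ) => T w) this
      simpa [hskew (f' z v) (f' z w)] using happ
    have hsymm : ∀ z v w, f'' z v w = f'' z w v := fun z =>
      second_derivative_symmetric hg' (hf'' z)
    -- f' z is symplectic
    have hzero : ∀ z v w, Ω (g z) (f'' z w v) = 0 := by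
      intro z v w
      have h1 := key z v w
      have h2 := key z w v
      rw [hsymm z v w] at h2
      have := hskew w v
      have := hskew (f' z w) (f' z v)
      linarith
    have hsymp : ∀ z w v, Ω (f' z w) (f' z v) = Ω w v := by
      intro z w v
      have h := key z v w
      rw [hzero z v w] at h
      linarith
    -- f' z is bijective (as a linear map)
    have hinj : ∀ z, Function.Injective (f' z) := by
      intro z v w hvw
      have : ∀ y, Ω (v - w) y = 0 := by
        intro y
        have h1 := hsymp z v y
        have h2 := hsymp z w y
        rw [hvw] at h1
        simp only [map_sub, ContinuousLinearMap.sub_apply]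
        linarith
      have := hnd _ this
      exact sub_eq_zero.mp this
    have hbij : ∀ z, Function.Bijective (f' z) := by
      intro z
      refine ⟨hinj z, ?_⟩
      have : Function.Injective ((f' z : V →ₗ[ℝ] V)) := hinj z
      exact LinearMap.injective_iff_surjective.mp this
    -- Euler identity : g z = f' z z
    have heuler : ∀ z, g z = f' z z := by
      intro z
      have hv : ∀ y, Ω (g z - f' z z) y = 0 := by
        intro y
        obtain ⟨v, hv⟩ := (hbij z).2 y
        rw [← hv]
        have h1 := H z v
        have h2 := hsymp z z v
        simp [map_sub, ContinuousLinearMap.sub_apply, h1, h2]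
      have := hnd _ hv
      have := sub_eq_zero.mp this
      exact this
    -- homogeneity along rays: g z = f' 0 z
    have hlin : ∀ z, g z = f' 0 z := by
      intro z
      set ψ : ℝ → V := fun t => f' (t • z) z with hψdef
      have hray : ∀ t : ℝ, HasDerivAt (fun t : ℝ => t • z) z t := by
        intro t
        simpa using (hasDerivAt_id t).smul_const z
      have hφ : ∀ t : ℝ, HasDerivAt (fun t => g (t • z)) (ψ t) t := by
        intro t
        exact (hg' (t • z)).comp_hasDerivAt t (hray t)
      set A : (V →L[ℝ] V) →L[ℝ] V := ContinuousLinearMap.apply ℝ V z with hAdef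
      have hψ : ∀ t : ℝ, HasDerivAt ψ (f'' (t • z) z z) t := by
        intro t
        have h1 : HasFDerivAt (fun y => A (f' y)) (A.comp (f'' (t • z))) (t • z) :=
          A.hasFDerivAt.comp (t • z) (hf'' (t • z))
        have h2 := h1.comp_hasDerivAt t (hray t)
        exact h2
      -- φ t = t • ψ t
      have hid : ∀ t : ℝ, g (t • z) = t • ψ t := by
        intro t
        rw [heuler (t • z)]
        simp [hψdef, map_smul]
      -- differentiate both sides
      have hderiv0 : ∀ t : ℝ, t ≠ 0 → f'' (t • z) z z = 0 := by
        intro t ht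
        have h1 := (hasDerivAt_id t).smul (hψ t)
        simp only [id] at h1
        have h2 : HasDerivAt (fun t : ℝ => t • ψ t) (ψ t) t := by
          have : (fun t : ℝ => t • ψ t) = fun t => g (t • z) := by
            funext s; rw [hid s]
          rw [this]; exact hφ t
        have h3 := h1.unique h2
        rw [one_smul, add_eq_right] at h3
        exact (smul_eq_zero.mp h3).resolve_left ht
      -- continuity gives the value at 0 too
      have hcont : Continuous fun t : ℝ => f'' (t • z) z z := by
        have h1 : Continuous f'' := hgd.continuous_fderiv (by simp)
        have h2 : Continuous fun t : ℝ => f'' (t • z) :=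
          h1.comp (continuous_id.smul continuous_const)
        exact ((ContinuousLinearMap.apply ℝ V z).continuous.comp
          (((ContinuousLinearMap.apply ℝ (V →L[ℝ] V) z).continuous.comp h2))).congr
          (fun t => rfl)
      have hderiv : ∀ t : ℝ, f'' (t • z) z z = 0 := by
        intro t
        rcases eq_or_ne t 0 with rfl | ht
        · -- limit of zero values
          have hne : (nhdsWithin (0:ℝ) {(0:ℝ)}ᶜ).NeBot :=
            inferInstance
          have h1 : Filter.Tendsto (fun t : ℝ => f'' (t • z) z z)
              (nhdsWithin (0:ℝ) {(0:ℝ)}ᶜ) (nhds (f'' ((0:ℝ) • z) z z)) :=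
            (hcont.tendsto 0).mono_left nhdsWithin_le_nhds
          have h2 : Filter.Tendsto (fun t : ℝ => f'' (t • z) z z)
              (nhdsWithin (0:ℝ) {(0:ℝ)}ᶜ) (nhds 0) := by
            apply Filter.Tendsto.congr' _ tendsto_const_nhds
            filter_upwards [self_mem_nhdsWithin] with s hs
            exact (hderiv0 s hs).symm
          exact tendsto_nhds_unique h1 h2
        · exact hderiv0 t ht
      -- ψ is constant
      have hψdiff : Differentiable ℝ ψ := fun t => (hψ t).differentiableAt
      have hψderiv : ∀ t, deriv ψ t = 0 := by
        intro t; rw [(hψ t).deriv]; exact hderiv t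
      have hconst := is_const_of_deriv_eq_zero hψdiff hψderiv 1 0
      have : ψ 1 = ψ 0 := hconst
      calc g z = g ((1:ℝ) • z) := by rw [one_smul]
        _ = (1:ℝ) • ψ 1 := hid 1
        _ = ψ 0 := by rw [one_smul, this]
        _ = f' 0 z := by simp [hψdef]
    -- conclude
    refine ⟨(f' 0 : V →ₗ[ℝ] V), ⟨?_, ?_⟩, ?_⟩
    · exact hbij 0
    · intro x y; exact hsymp 0 x y
    · intro z; exact hlin z
  · rintro ⟨γ, ⟨hbij, hsympl⟩, hgγ⟩
    intro z v
    set G : V →L[ℝ] V := LinearMap.toContinuousLinearMap γ with hGdef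
    have hgG : g = ⇑G := by
      funext x; rw [hgγ x]; rfl
    rw [hgG, G.fderiv]
    have : G z = γ z := rfl
    have h2 : G v = γ v := rfl
    rw [this, h2]
    exact hsympl z v
end

section
/- Fix a ∈ V and define θᵃ_z(v) = (1/2)Ω(z + a, v). A smooth map g : V → V satisfies g*θᵃ = θᵃ if and only if g(z) = γ(z + a) − a for some γ ∈ Sp(V, Ω). Equivalently, Aut(V, θᵃ) consists exactly of the affine symplectic automorphisms fixing −a. -/
/-- linear case: a smooth map g satisfies g*θᵃ = θᵃ, with
θᵃ_z(v) = (1/2)Ω(z + a, v), iff g(z) = γ(z + a) − a for some γ ∈ Sp(V, Ω). -/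
theorem stmt10 {V : Type*} [NormedAddCommGroup V] [NormedSpace ℝ V]
    [FiniteDimensional ℝ V]
    (Ω : V →L[ℝ] V →L[ℝ] ℝ)
    (halt : ∀ x, Ω x x = 0)
    (hnd : ∀ x, (∀ y, Ω x y = 0) → x = 0)
    (a : V) (g : V → V) (hg : ContDiff ℝ (⊤ : ℕ∞) g) :
    (∀ z v : V, Ω (g z + a) (fderiv ℝ g z v) = Ω (z + a) v) ↔
      ∃ γ : V →ₗ[ℝ] V, IsLinSymp Ω γ ∧ ∀ z, g z = γ (z + a) - a := by
  constructor
  · intro H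
    -- skew-symmetry of Ω
    have hskew : ∀ x y : V, Ω x y = - Ω y x := by
      intro x y
      have h := halt (x + y)
      simp only [map_add, ContinuousLinearMap.add_apply, halt] at h
      linarith
    have hgd : Differentiable ℝ g := hg.differentiable (by simp)
    have hgf : ContDiff ℝ 1 (fderiv ℝ g) := hg.fderiv_right (WithTop.coe_le_coe.2 le_top)
    -- Step A : differentiate the hypothesis
    have L1 : ∀ z u v : V, Ω (fderiv ℝ g z u) (fderiv ℝ g z v)
        + Ω (g z + a) (fderiv ℝ (fderiv ℝ g) z u v) = Ω u v := by
      intro z u v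
      have h1 : HasFDerivAt (fun z => g z + a) (fderiv ℝ g z) z :=
        (hgd z).hasFDerivAt.add_const a
      have h2 : HasFDerivAt (fun z => fderiv ℝ g z v)
          ((ContinuousLinearMap.apply ℝ V v).comp (fderiv ℝ (fderiv ℝ g) z)) z :=
        (ContinuousLinearMap.apply ℝ V v).hasFDerivAt.comp z
          ((hgf.differentiable one_ne_zero z).hasFDerivAt)
      have hB := (Ω.isBoundedBilinearMap.hasFDerivAt
        (g z + a, fderiv ℝ g z v)).comp z (h1.prodMk h2)
      have heq : (fun z => Ω (g z + a) (fderiv ℝ g z v)) = fun z => Ω (z + a) v :=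
        funext fun z => H z v
      simp only [Function.comp_def] at hB
      rw [heq] at hB
      have hC : HasFDerivAt (fun z : V => Ω (z + a) v) (Ω.flip v) z := by
        have h3 : HasFDerivAt (fun z : V => z + a) (ContinuousLinearMap.id ℝ V) z :=
          (hasFDerivAt_id z).add_const a
        have h4 := (Ω.flip v).hasFDerivAt.comp z h3
        simpa only [Function.comp_def, ContinuousLinearMap.flip_apply,
          ContinuousLinearMap.comp_id] using h4
      have h4 := ContinuousLinearMap.ext_iff.1 (hB.unique hC) u
      simp only [ContinuousLinearMap.comp_apply, ContinuousLinearMap.prod_apply,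
        IsBoundedBilinearMap.deriv_apply, ContinuousLinearMap.flip_apply,
        ContinuousLinearMap.apply_apply] at h4
      linarith [h4]
    -- symmetry of the second derivative
    have hsymm : ∀ z u v : V,
        fderiv ℝ (fderiv ℝ g) z u v = fderiv ℝ (fderiv ℝ g) z v u := by
      intro z u v
      exact (hg.contDiffAt.isSymmSndFDerivAt (by rw [minSmoothness_of_isRCLikeNormedField]; exact WithTop.coe_le_coe.2 (le_top : (2:ℕ∞) ≤ ⊤))).eq u v
    -- Step B : each differential is symplectic
    have L2a : ∀ z u v : V, Ω (g z + a) (fderiv ℝ (fderiv ℝ g) z u v) = 0 := by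
      intro z u v
      have h1 := L1 z u v
      have h2 := L1 z v u
      rw [hsymm z v u] at h2
      have h3 := hskew (fderiv ℝ g z u) (fderiv ℝ g z v)
      have h4 := hskew u v
      linarith
    have L2b : ∀ z u v : V, Ω (fderiv ℝ g z u) (fderiv ℝ g z v) = Ω u v := by
      intro z u v
      have := L1 z u v
      have := L2a z u v
      linarith
    -- injectivity and surjectivity of each differential
    have L3i : ∀ z : V, Function.Injective (fderiv ℝ g z) := by
      intro z u u' huu'
      have h0 : fderiv ℝ g z (u - u') = 0 := by rw [map_sub, huu', sub_self]
      have : u - u' = 0 := by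
        apply hnd
        intro y
        have h1 := L2b z (u - u') y
        rw [h0] at h1
        simpa using h1.symm
      exact sub_eq_zero.1 this
    have L3s : ∀ z : V, Function.Surjective (fderiv ℝ g z) := by
      intro z
      have h1 : Function.Injective ((fderiv ℝ g z : V →ₗ[ℝ] V)) := L3i z
      exact LinearMap.injective_iff_surjective.1 h1
    -- Step C : the Euler-type identity g z + a = Dg_z (z + a)
    have L4 : ∀ z : V, g z + a = fderiv ℝ g z (z + a) := by
      intro z
      have h1 : ∀ y, Ω (g z + a - fderiv ℝ g z (z + a)) y = 0 := by
        intro y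
        obtain ⟨v, rfl⟩ := L3s z y
        have h2 := H z v
        have h3 := L2b z (z + a) v
        rw [map_sub]
        simp only [ContinuousLinearMap.sub_apply]
        rw [h2, h3]
        ring
      have := hnd _ h1
      rwa [sub_eq_zero] at this
    -- Step D : homogeneity via an ODE-free argument
    have L5 : ∀ w : V, g (w - a) + a = fderiv ℝ g (-a) w := by
      intro w
      set φ : ℝ → V := fun t => fderiv ℝ g (t • w - a) w with hφ
      have hline : ∀ t : ℝ, HasDerivAt (fun t : ℝ => t • w - a) w t := by
        intro t
        have := ((hasDerivAt_id t).smul_const w).sub_const a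
        simpa using this
      have hu : ∀ t : ℝ, HasDerivAt (fun t : ℝ => g (t • w - a) + a) (φ t) t := by
        intro t
        exact (((hgd _).hasFDerivAt.comp_hasDerivAt t (hline t)).add_const a)
      have hut : ∀ t : ℝ, g (t • w - a) + a = t • φ t := by
        intro t
        have h1 := L4 (t • w - a)
        rw [h1]
        have h2 : t • w - a + a = t • w := by abel
        rw [h2, map_smul]
      have hlinecd : ContDiff ℝ 1 (fun t : ℝ => t • w - a) :=
        ((contDiff_id.smul contDiff_const).sub contDiff_const)
      have hφcd : ContDiff ℝ 1 φ :=
        (ContinuousLinearMap.apply ℝ V w).contDiff.comp (hgf.comp hlinecd)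
      have hφd : Differentiable ℝ φ := hφcd.differentiable one_ne_zero
      have hder0 : ∀ t : ℝ, t ≠ 0 → deriv φ t = 0 := by
        intro t ht
        have h1 : HasDerivAt (fun t : ℝ => t • φ t) (t • deriv φ t + (1 : ℝ) • φ t) t :=
          (hasDerivAt_id t).smul (hφd t).hasDerivAt
        have h2 : (fun t : ℝ => t • φ t) = fun t : ℝ => g (t • w - a) + a :=
          funext fun t => (hut t).symm
        rw [h2] at h1
        have h3 := h1.unique (hu t)
        have h4 : t • deriv φ t = 0 := by
          rw [one_smul] at h3
          have : t • deriv φ t + φ t - φ t = φ t - φ t := by rw [h3]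
          simpa using this
        rcases smul_eq_zero.1 h4 with h | h
        · exact absurd h ht
        · exact h
      have hderall : ∀ t : ℝ, deriv φ t = 0 := by
        have hcont : Continuous (deriv φ) := hφcd.continuous_deriv le_rfl
        have heq : deriv φ = fun _ => (0 : V) := by
          apply Continuous.ext_on (dense_compl_singleton (0 : ℝ)) hcont continuous_const
          intro t ht
          exact hder0 t ht
        intro t; rw [heq]
      have hconst : φ 1 = φ 0 := is_const_of_deriv_eq_zero hφd hderall 1 0
      have h1 := hut 1
      rw [one_smul, one_smul] at h1
      rw [h1, hconst]
      simp [hφ]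
    -- assemble the conclusion
    refine ⟨(fderiv ℝ g (-a) : V →ₗ[ℝ] V), ⟨⟨L3i (-a), L3s (-a)⟩, fun x y => L2b (-a) x y⟩,
      fun z => ?_⟩
    have h1 := L5 (z + a)
    have h2 : z + a - a = z := by abel
    rw [h2] at h1
    simp only [ContinuousLinearMap.coe_coe]
    rw [← h1]
    abel
  · rintro ⟨γ, ⟨hbij, hsymp⟩, hgz⟩
    intro z v
    set γL := LinearMap.toContinuousLinearMap γ with hγL
    have hγLa : ∀ x, γL x = γ x := fun x => rfl
    have hgfun : g = fun z => γL (z + a) - a := funext fun z => by rw [hgz z]; rfl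
    have hfd : HasFDerivAt g γL z := by
      rw [hgfun]
      have h1 : HasFDerivAt (fun z : V => z + a) (ContinuousLinearMap.id ℝ V) z :=
        (hasFDerivAt_id z).add_const a
      have h2 := (γL.hasFDerivAt.comp z h1).sub_const a
      simpa using h2
    rw [hfd.fderiv]
    rw [hgz z]
    have : γ (z + a) - a + a = γ (z + a) := by abel
    rw [this, hγLa]
    exact hsymp (z + a) v
end

section
/- Fix a, b ∈ V with θᵃ, θᵇ the linear-case Liouville forms θˣ_z(v) = (1/2)Ω(z + x, v). A smooth map g : V → V satisfies g*θᵇ = θᵃ if and only if g = τ_b⁻¹ ∘ γ ∘ τ_a for some γ ∈ Sp(V, Ω), where τ_x denotes translation by x. In particular all such Liouville structures are isomorphic. -/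
/-- linear-case isomorphisms: g*θᵇ = θᵃ iff
g = τ_b⁻¹ ∘ γ ∘ τ_a for some γ ∈ Sp(V, Ω), i.e. g(z) = γ(z + a) − b. -/
theorem stmt12 {V : Type*} [NormedAddCommGroup V] [NormedSpace ℝ V]
    [FiniteDimensional ℝ V]
    (Ω : V →L[ℝ] V →L[ℝ] ℝ)
    (halt : ∀ x, Ω x x = 0)
    (hnd : ∀ x, (∀ y, Ω x y = 0) → x = 0)
    (a b : V) (g : V → V) (hg : ContDiff ℝ (⊤ : ℕ∞) g) :
    (∀ z v : V, Ω (g z + b) (fderiv ℝ g z v) = Ω (z + a) v) ↔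
      ∃ γ : V →ₗ[ℝ] V, IsLinSymp Ω γ ∧
        ∀ z, g z = (fun w => w - b) (γ ((fun w => w + a) z)) := by
  constructor
  · intro H
    have hgd : Differentiable ℝ g := hg.differentiable (by simp)
    set D : V → V →L[ℝ] V := fderiv ℝ g with hD
    have hDd : Differentiable ℝ D := (hg.fderiv_right (m := 1) (WithTop.coe_le_coe.mpr le_top)).differentiable one_ne_zero
    -- antisymmetry of Ω
    have hanti : ∀ x y, Ω x y = - Ω y x := by
      intro x y
      have h := halt (x + y)
      simp only [map_add, ContinuousLinearMap.add_apply, halt] at h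
      linarith
    -- differentiate the hypothesis
    have key1 : ∀ z w v : V,
        Ω (g z + b) (fderiv ℝ D z w v) + Ω (D z w) (D z v) = Ω w v := by
      intro z w v
      have hc : HasFDerivAt (fun z => Ω (g z + b)) (Ω.comp (D z)) z :=
        Ω.hasFDerivAt.comp z ((hgd z).hasFDerivAt.add_const b)
      have hu : HasFDerivAt (fun z => D z v) ((fderiv ℝ D z).flip v) z := by
        simpa using (hDd z).hasFDerivAt.clm_apply (hasFDerivAt_const v z)
      have hL : HasFDerivAt (fun z => Ω (g z + b) (D z v))
          ((Ω (g z + b)).comp ((fderiv ℝ D z).flip v) + (Ω.comp (D z)).flip (D z v)) z :=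
        hc.clm_apply hu
      have hR : HasFDerivAt (fun z => Ω (z + a) v) (Ω.flip v) z := by
        have h1 : (fun z : V => Ω (z + a) v) = fun z => Ω.flip v z + Ω.flip v a := by
          funext z
          simp [map_add]
        rw [h1]
        exact (Ω.flip v).hasFDerivAt.add_const _
      have heq : (fun z => Ω (g z + b) (D z v)) = fun z => Ω (z + a) v :=
        funext fun z => H z v
      rw [heq] at hL
      have hder := hL.unique hR
      have := congrFun (congrArg (fun (T : V →L[ℝ] ℝ) => (T : V → ℝ)) hder) w
      simpa [ContinuousLinearMap.add_apply, ContinuousLinearMap.comp_apply,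
        ContinuousLinearMap.flip_apply] using this
    -- second derivative symmetry
    have hsym : ∀ z w v : V, fderiv ℝ D z w v = fderiv ℝ D z v w := fun z w v =>
      second_derivative_symmetric (fun y => (hgd y).hasFDerivAt) ((hDd z).hasFDerivAt) w v
    -- each D z is symplectic
    have hsymp : ∀ z w v, Ω (D z w) (D z v) = Ω w v := by
      intro z w v
      have h1 := key1 z w v
      have h2 := key1 z v w
      rw [hsym z w v] at h1
      have ha1 := hanti (D z v) (D z w)
      have ha2 := hanti v w
      linarith
    -- each D z is injective, hence bijective
    have hinj : ∀ z, Function.Injective (D z) := by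
      intro z x y hxy
      have h0 : ∀ u, Ω (x - y) u = 0 := by
        intro u
        have := hsymp z (x - y) u
        rw [map_sub, hxy, sub_self] at this
        rw [← this]
        simp
      have := hnd _ h0
      exact sub_eq_zero.mp this
    have hsurj : ∀ z, Function.Surjective (D z) := by
      intro z
      have : Function.Injective ((D z) : V →ₗ[ℝ] V) := hinj z
      exact LinearMap.injective_iff_surjective.mp this
    -- key pointwise identity : g z + b = D z (z + a)
    have hB : ∀ z, g z + b = D z (z + a) := by
      intro z
      have h0 : ∀ u, Ω (g z + b - D z (z + a)) u = 0 := by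
        intro u
        obtain ⟨v, hv⟩ := hsurj z u
        have h1 := H z v
        have h2 := hsymp z (z + a) v
        rw [← hv, map_sub, ContinuousLinearMap.sub_apply, h1, h2, sub_self]
      have := hnd _ h0
      have := sub_eq_zero.mp this
      exact this
    -- Euler homogeneity argument
    have hmain : ∀ z, g z + b = D (-a) (z + a) := by
      intro z
      set c : V := z + a with hc
      set p : ℝ → V := fun t => t • c - a with hp
      set u : ℝ → V := fun t => g (p t) + b with hu
      have hpder : ∀ t : ℝ, HasDerivAt p c t := by
        intro t
        have : HasDerivAt (fun t : ℝ => t • c) c t := by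
          simpa using (hasDerivAt_id t).smul_const c
        exact this.sub_const a
      have hU : ∀ t : ℝ, HasDerivAt u (D (p t) c) t := by
        intro t
        exact (((hgd (p t)).hasFDerivAt.comp_hasDerivAt t (hpder t)).add_const b)
      have hkey : ∀ t : ℝ, u t = t • D (p t) c := by
        intro t
        have := hB (p t)
        rw [hu]
        simp only
        rw [this]
        have : p t + a = t • c := by simp [hp]
        rw [this, map_smul]
      -- constancy of t ↦ t⁻¹ • u t on (0, ∞)
      set φ : ℝ → V := fun t => t⁻¹ • u t with hφ
      have hφ' : ∀ t ∈ Set.Ioi (0:ℝ), HasDerivAt φ 0 t := by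
        intro t ht
        have htne : t ≠ 0 := ne_of_gt ht
        have h1 : HasDerivAt (fun s : ℝ => s⁻¹) (-(t^2)⁻¹) t := hasDerivAt_inv htne
        have h2 := h1.smul (hU t)
        have heq : t⁻¹ • D (p t) c + (-(t^2)⁻¹) • u t = 0 := by
          rw [hkey t, smul_smul]
          have : -(t ^ 2)⁻¹ * t = -t⁻¹ := by
            field_simp
          rw [this, neg_smul, add_neg_eq_zero]
        rw [heq] at h2
        exact h2
      have hconst : ∀ t ∈ Set.Ioi (0:ℝ), φ t = φ 1 := by
        intro t ht
        have hdiff : DifferentiableOn ℝ φ (Set.Ioi (0:ℝ)) := fun s hs =>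
          ((hφ' s hs).differentiableAt).differentiableWithinAt
        have hzero : ∀ s ∈ Set.Ioi (0:ℝ), fderivWithin ℝ φ (Set.Ioi (0:ℝ)) s = 0 := by
          intro s hs
          rw [fderivWithin_of_isOpen isOpen_Ioi hs]
          have := (hφ' s hs).hasFDerivAt.fderiv
          rw [this]
          refine ContinuousLinearMap.ext fun y => ?_
          simp
        exact Convex.is_const_of_fderivWithin_eq_zero (convex_Ioi 0) hdiff hzero ht
          (by norm_num : (1:ℝ) ∈ Set.Ioi (0:ℝ))
      have hlin : ∀ t ∈ Set.Ioi (0:ℝ), u t = t • u 1 := by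
        intro t ht
        have := hconst t ht
        rw [hφ] at this
        simp only at this
        have htne : t ≠ 0 := ne_of_gt ht
        have h1 : (1:ℝ)⁻¹ • u 1 = u 1 := by simp
        rw [h1] at this
        calc u t = t • t⁻¹ • u t := by rw [smul_smul, mul_inv_cancel₀ htne, one_smul]
        _ = t • u 1 := by rw [this]
      -- derivative at 0 from the right
      have hu0 : u 0 = 0 := by
        have := hkey 0
        simpa using this
      have h1 : HasDerivWithinAt u (D (p 0) c) (Set.Ici (0:ℝ)) 0 := (hU 0).hasDerivWithinAt
      have h2 : HasDerivWithinAt u (u 1) (Set.Ici (0:ℝ)) 0 := by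
        have hmodel : HasDerivWithinAt (fun t : ℝ => t • u 1) (u 1) (Set.Ici (0:ℝ)) 0 := by
          have : HasDerivAt (fun t : ℝ => t • u 1) (u 1) 0 := by
            simpa using (hasDerivAt_id (0:ℝ)).smul_const (u 1)
          exact this.hasDerivWithinAt
        apply hmodel.congr
        · intro y hy
          rcases eq_or_lt_of_le (Set.mem_Ici.mp hy) with h | h
          · rw [← h, hu0]
            simp
          · exact hlin y h
        · rw [hu0]
          simp
      have huniq : D (p 0) c = u 1 := by
        have hud : UniqueDiffWithinAt ℝ (Set.Ici (0:ℝ)) 0 :=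
          uniqueDiffOn_Ici 0 0 Set.self_mem_Ici
        have e1 := h1.derivWithin hud
        have e2 := h2.derivWithin hud
        rw [e1] at e2
        exact e2
      have hp0 : p 0 = -a := by simp [hp]
      have hu1 : u 1 = g z + b := by
        have hp1 : p 1 = z := by simp [hp, hc]
        simp only [hu, hp1]
      rw [hp0, hu1] at huniq
      exact huniq.symm
    refine ⟨((D (-a) : V →L[ℝ] V) : V →ₗ[ℝ] V),
      ⟨⟨?_, ?_⟩, fun x y => hsymp (-a) x y⟩, fun z => ?_⟩
    · exact hinj (-a)
    · exact hsurj (-a)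
    · simp only [ContinuousLinearMap.coe_coe]
      rw [eq_sub_iff_add_eq]
      exact hmain z
  · rintro ⟨γ, ⟨hbij, hsympl⟩, hgz⟩ z v
    set Γ : V →L[ℝ] V := LinearMap.toContinuousLinearMap γ with hΓ
    have hΓe : ∀ x, Γ x = γ x := fun x => rfl
    have hgeq : g = fun w => Γ (w + a) - b := by
      funext w
      rw [hgz w]
      simp [hΓe]
    have hfd : fderiv ℝ g z = Γ := by
      rw [hgeq]
      have hder : HasFDerivAt (fun w : V => Γ (w + a) - b) Γ z := by
        have h0 : HasFDerivAt (fun w : V => w + a) (ContinuousLinearMap.id ℝ V) z :=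
          (hasFDerivAt_id z).add_const a
        have := (Γ.hasFDerivAt.comp z h0).sub_const b
        simpa using this
      exact hder.fderiv
    rw [hfd, hgz z]
    simp only [sub_add_cancel]
    exact hsympl (z + a) v
end

section
/- Fix a ∈ V, a ≠ 0, and θᵃ_z(v) = (1/2)Ω(z + Ω(a,z)·a, v). If γ ∈ Sp(V, Ω) satisfies γ*θᵃ = θᵃ, then γ(a) = a or γ(a) = −a. -/
/-- quadratic case, converse: if a ≠ 0 and γ ∈ Sp(V, Ω)
preserves θᵃ_z(v) = (1/2)Ω(z + Ω(a,z)a, v), then γ(a) = a or γ(a) = −a. -/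
theorem stmt14 {V : Type*} [NormedAddCommGroup V] [NormedSpace ℝ V]
    [FiniteDimensional ℝ V]
    (Ω : V →L[ℝ] V →L[ℝ] ℝ)
    (halt : ∀ x, Ω x x = 0)
    (hnd : ∀ x, (∀ y, Ω x y = 0) → x = 0)
    (a : V) (ha : a ≠ 0) (γ : V →ₗ[ℝ] V) (hγ : IsLinSymp Ω γ)
    (hpull : ∀ z v : V, Ω (γ z + Ω a (γ z) • a) (γ v) = Ω (z + Ω a z • a) v) :
    γ a = a ∨ γ a = -a := by
  obtain ⟨hbij, hsymp⟩ := hγ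
  have key : ∀ z v, Ω a (γ z) * Ω a (γ v) = Ω a z * Ω a v := by
    intro z v
    have h := hpull z v
    simp only [map_add, map_smul, ContinuousLinearMap.add_apply,
      ContinuousLinearMap.coe_smul', Pi.smul_apply, smul_eq_mul, hsymp] at h
    linarith
  obtain ⟨z0, hz0⟩ : ∃ z0, Ω a z0 ≠ 0 := by
    by_contra h
    push_neg at h
    exact ha (hnd a h)
  have hf : (Ω a (γ z0) - Ω a z0) * (Ω a (γ z0) + Ω a z0) = 0 := by
    linear_combination key z0 z0
  rcases mul_eq_zero.mp hf with h | h
  · left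
    have h0 : Ω a (γ z0) = Ω a z0 := by linarith
    have hall : ∀ v, Ω a (γ v) = Ω a v := by
      intro v
      have := key v z0
      rw [h0] at this
      exact mul_right_cancel₀ hz0 this
    have heq : ∀ w, Ω (a - γ a) w = 0 := by
      intro w
      obtain ⟨v, rfl⟩ := hbij.2 w
      simp only [map_sub, ContinuousLinearMap.sub_apply]
      rw [hsymp a v, hall v]
      ring
    have := hnd _ heq
    have : a = γ a := by
      have := sub_eq_zero.mp this
      exact this
    exact this.symm
  · right
    have h0 : Ω a (γ z0) = -Ω a z0 := by linarith
    have hall : ∀ v, Ω a (γ v) = -Ω a v := by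
      intro v
      have := key v z0
      rw [h0] at this
      have : Ω a (γ v) * Ω a z0 = -Ω a v * Ω a z0 := by linarith
      have := mul_right_cancel₀ hz0 this
      linarith
    have heq : ∀ w, Ω (a + γ a) w = 0 := by
      intro w
      obtain ⟨v, rfl⟩ := hbij.2 w
      simp only [map_add, ContinuousLinearMap.add_apply]
      rw [hsymp a v, hall v]
      ring
    have h1 := hnd _ heq
    exact eq_neg_of_add_eq_zero_right h1
end

section
/- For a ∈ V, a ≠ 0, there is no γ ∈ Sp(V, Ω) with γ*(θ⁰ + dψᵃ) = θ⁰ − dψᵃ among linear symplectic maps: equivalently, there is no γ ∈ Sp(V, Ω) and real λ with γ(a) = λa and λ² = −1, so the quadratic Liouville structures (V, θ⁰ + dψᵃ) and (V, θ⁰ − dψᵃ) are not linearly isomorphic. -/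
/-- for a ≠ 0 there is no γ ∈ Sp(V, Ω) with
γ*(θ⁰ + dψᵃ) = θ⁰ − dψᵃ, i.e. Ω(γz + Ω(a,γz)a, γv) = Ω(z − Ω(a,z)a, v) for
all z, v; equivalently there is no γ ∈ Sp(V, Ω) and real λ with γ(a) = λa
and λ² = −1. -/
theorem stmt15 {V : Type*} [NormedAddCommGroup V] [NormedSpace ℝ V]
    [FiniteDimensional ℝ V]
    (Ω : V →L[ℝ] V →L[ℝ] ℝ)
    (halt : ∀ x, Ω x x = 0)
    (hnd : ∀ x, (∀ y, Ω x y = 0) → x = 0)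
    (a : V) (ha : a ≠ 0) :
    (¬ ∃ γ : V →ₗ[ℝ] V, IsLinSymp Ω γ ∧
        ∀ z v : V, Ω (γ z + Ω a (γ z) • a) (γ v) = Ω (z - Ω a z • a) v) ∧
    (¬ ∃ (γ : V →ₗ[ℝ] V) (lam : ℝ), IsLinSymp Ω γ ∧ γ a = lam • a ∧
        lam ^ 2 = -1) := by
  constructor
  · rintro ⟨γ, ⟨-, hsymp⟩, h⟩
    apply ha
    apply hnd
    intro z
    have hz := h z z
    simp only [map_add, map_sub, map_smul, ContinuousLinearMap.add_apply,
      ContinuousLinearMap.sub_apply, ContinuousLinearMap.smul_apply,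
      smul_eq_mul] at hz
    rw [halt, halt] at hz
    -- hz : 0 + Ω a (γ z) * Ω a (γ z) = 0 - Ω a z * Ω a z
    have h1 : Ω a (γ z) * Ω a (γ z) + Ω a z * Ω a z = 0 := by linarith
    have h2 : Ω a z * Ω a z = 0 := by nlinarith [mul_self_nonneg (Ω a (γ z)), mul_self_nonneg (Ω a z)]
    have := mul_self_eq_zero.mp h2
    linear_combination this
  · rintro ⟨γ, lam, -, -, hlam⟩
    nlinarith [sq_nonneg lam]
end

section
/- Fix a ∈ V and integer n ≥ 1, and let f_a(z) = z + (1/n)Ω(a, z)^{n+1}·a. Then f_a pulls back the Liouville form θᵃ to the canonical one: (1/2)Ω(f_a(z), Df_a)_z(v)) = (1/2)Ω(z, v) for all z, v ∈ V, where θᵃ_z(v) = (1/2)Ω(z + Ω(a,z)^{n+1}·a, v). In particular f_a is a symplectomorphism of (V, ω). -/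
/-!
The differential of `f_a` at `z` is the symplectic transvection `v ↦ v + (t * Ω a v) • a` with
`t = ((n + 1) / n) * Ω(a, z)ⁿ`, and every transvection along `a` preserves `Ω`. For the Liouville
forms, `Ω(a, ·)` is unchanged by `f_a`, so `f_a z + Ω(a, f_a z)^{n+1} • a = z + s • a` with
`s = ((n + 1) / n) * Ω(a, z)^{n+1}`; by antisymmetry the correction terms of `Ω(z + s • a, Df v)`
are `(s - t * Ω(a, z)) * Ω(a, v)`, which vanishes.
-/

namespace LinearMap.IsAlt

variable {R M : Type*} [CommRing R] [AddCommGroup M] [Module R M] {B : M →ₗ[R] M →ₗ[R] R}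

theorem apply_add_smul_add_smul (hB : B.IsAlt) (x y a : M) (s t : R) :
    B (x + s • a) (y + t • a) = B x y + s * B a y - t * B a x := by
  have hxa : B x a = -B a x := (hB.neg a x).symm
  simp only [map_add, map_smul, LinearMap.add_apply, LinearMap.smul_apply, smul_eq_mul, hB a,
    hxa]
  ring

theorem apply_transvection (hB : B.IsAlt) (a x y : M) (t : R) :
    B (x + (t * B a x) • a) (y + (t * B a y) • a) = B x y := by
  rw [hB.apply_add_smul_add_smul]
  ring

end LinearMap.IsAlt

section Shear

variable {𝕜 E : Type*} [NontriviallyNormedField 𝕜] [NormedAddCommGroup E] [NormedSpace 𝕜 E]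
  {g : 𝕜 → 𝕜} {g' : 𝕜}

theorem hasFDerivAt_add_smul_comp (φ : E →L[𝕜] 𝕜) (a : E) {z : E}
    (hg : HasDerivAt g g' (φ z)) :
    HasFDerivAt (fun w => w + g (φ w) • a)
      (ContinuousLinearMap.id 𝕜 E + (g' • φ).smulRight a) z := by
  have hgφ : HasFDerivAt (fun w => g (φ w)) (g' • φ) z := by
    simpa [Function.comp_def] using hg.comp_hasFDerivAt z φ.hasFDerivAt
  exact (hasFDerivAt_id z).add (hgφ.smul_const a)

theorem fderiv_add_smul_comp_apply (φ : E →L[𝕜] 𝕜) (a : E) {z : E}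
    (hg : HasDerivAt g g' (φ z)) (v : E) :
    fderiv 𝕜 (fun w => w + g (φ w) • a) z v = v + (g' * φ v) • a := by
  simp [(hasFDerivAt_add_smul_comp φ a hg).fderiv]

end Shear

theorem stmt17_general {V : Type*} [NormedAddCommGroup V] [NormedSpace ℝ V]
    (Ω : V →L[ℝ] V →L[ℝ] ℝ)
    (halt : ∀ x, Ω x x = 0)
    (a : V) (n : ℕ) (hn : 1 ≤ n) :
    (∀ z v : V,
      ((1 : ℝ)/2) * Ω
          ((fun w : V => w + (((1 : ℝ)/n) * (Ω a w) ^ (n + 1)) • a) z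
            + (Ω a ((fun w : V => w + (((1 : ℝ)/n) * (Ω a w) ^ (n + 1)) • a) z)) ^ (n + 1) • a)
          (fderiv ℝ (fun w : V => w + (((1 : ℝ)/n) * (Ω a w) ^ (n + 1)) • a) z v)
        = ((1 : ℝ)/2) * Ω z v) ∧
    (∀ z x y : V,
      Ω (fderiv ℝ (fun w : V => w + (((1 : ℝ)/n) * (Ω a w) ^ (n + 1)) • a) z x)
        (fderiv ℝ (fun w : V => w + (((1 : ℝ)/n) * (Ω a w) ^ (n + 1)) • a) z y)
        = Ω x y) := by
  have hΩ : Ω.toLinearMap₁₂.IsAlt := halt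
  have hDf (z v : V) :
      fderiv ℝ (fun w : V => w + (((1 : ℝ)/n) * (Ω a w) ^ (n + 1)) • a) z v
        = v + ((1 / n * ((n + 1 : ℕ) * Ω a z ^ n)) * Ω a v) • a := by
    refine fderiv_add_smul_comp_apply (g := fun t : ℝ => 1 / n * t ^ (n + 1)) (Ω a) a ?_ v
    simpa using (hasDerivAt_pow (n + 1) (Ω a z)).const_mul (1 / (n : ℝ))
  refine ⟨fun z v => ?_, fun z x y => by rw [hDf, hDf]; exact hΩ.apply_transvection a x y _⟩
  have hfa : Ω a (z + (1 / n * Ω a z ^ (n + 1)) • a) = Ω a z := by simp [halt]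
  rw [hDf, hfa, add_assoc, ← add_smul]
  have hexpand := hΩ.apply_add_smul_add_smul z v a (1 / n * Ω a z ^ (n + 1) + Ω a z ^ (n + 1))
    (1 / n * ((n + 1 : ℕ) * Ω a z ^ n) * Ω a v)
  simp only [ContinuousLinearMap.toLinearMap₁₂_apply_apply_apply] at hexpand
  rw [hexpand]
  have hn0 : (n : ℝ) ≠ 0 := Nat.cast_ne_zero.mpr (by omega)
  field_simp
  push_cast
  ring

/-- f_a(z) = z + (1/n)Ω(a,z)^{n+1}·a pulls back the Liouville
form θᵃ_z(v) = (1/2)Ω(z + Ω(a,z)^{n+1}a, v) to the canonical θ⁰, and in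
particular f_a is a symplectomorphism of (V, ω). -/
theorem stmt17 {V : Type*} [NormedAddCommGroup V] [NormedSpace ℝ V]
    [FiniteDimensional ℝ V]
    (Ω : V →L[ℝ] V →L[ℝ] ℝ)
    (halt : ∀ x, Ω x x = 0)
    (hnd : ∀ x, (∀ y, Ω x y = 0) → x = 0)
    (a : V) (n : ℕ) (hn : 1 ≤ n) :
    (∀ z v : V,
      ((1 : ℝ)/2) * Ω
          ((fun w : V => w + (((1 : ℝ)/n) * (Ω a w) ^ (n + 1)) • a) z
            + (Ω a ((fun w : V => w + (((1 : ℝ)/n) * (Ω a w) ^ (n + 1)) • a) z)) ^ (n + 1) • a)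
          (fderiv ℝ (fun w : V => w + (((1 : ℝ)/n) * (Ω a w) ^ (n + 1)) • a) z v)
        = ((1 : ℝ)/2) * Ω z v) ∧
    (∀ z x y : V,
      Ω (fderiv ℝ (fun w : V => w + (((1 : ℝ)/n) * (Ω a w) ^ (n + 1)) • a) z x)
        (fderiv ℝ (fun w : V => w + (((1 : ℝ)/n) * (Ω a w) ^ (n + 1)) • a) z y)
        = Ω x y) :=
  stmt17_general Ω halt a n hn
end

section
/- Fix a ∈ V, integer n ≥ 1, and θᵃ_z(v) = (1/2)Ω(z + Ω(a,z)^{n+1}·a, v). A smooth map g : V → V satisfies g*θᵃ = θᵃ if and only if g = f_a ∘ γ ∘ f_a⁻¹ for some γ ∈ Sp(V, Ω), where f_a(z) = z + (1/n)Ω(a,z)^{n+1}·a. -/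
section Stmt18Aux

variable {V : Type*} [NormedAddCommGroup V] [NormedSpace ℝ V]

lemma hasFDerivAt_F (Ω : V →L[ℝ] V →L[ℝ] ℝ) (a : V) (n : ℕ) (c : ℝ) (z : V) :
    HasFDerivAt (fun z : V => z + (c * (Ω a z) ^ (n + 1)) • a)
      (ContinuousLinearMap.id ℝ V + (c * (n+1) * (Ω a z) ^ n) • (Ω a).smulRight a) z := by
  have hpow : HasFDerivAt (fun z : V => (Ω a z) ^ (n + 1))
      (((n+1 : ℕ) * (Ω a z) ^ n : ℝ) • (Ω a : V →L[ℝ] ℝ)) z := by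
    have h := (hasDerivAt_pow (n+1) (Ω a z)).comp_hasFDerivAt z ((Ω a).hasFDerivAt (x := z))
    exact h.congr_fderiv (by simp)
  have h1 : HasFDerivAt (fun z : V => c * (Ω a z) ^ (n + 1))
      ((c * (n+1) * (Ω a z) ^ n) • (Ω a : V →L[ℝ] ℝ)) z := by
    have h0 := hpow.const_mul c
    exact h0.congr_fderiv (by rw [smul_smul]; push_cast; ring_nf)
  have h2 := (hasFDerivAt_id z).add (h1.smul_const a)
  convert h2 using 1
  ext v
  simp [smul_smul]
  ext v
  simp [smul_smul]

lemma fderiv_F (Ω : V →L[ℝ] V →L[ℝ] ℝ) (a : V) (n : ℕ) (c : ℝ) (z v : V) :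
    fderiv ℝ (fun z : V => z + (c * (Ω a z) ^ (n + 1)) • a) z v
      = v + (c * (n+1) * (Ω a z) ^ n * Ω a v) • a := by
  rw [(hasFDerivAt_F Ω a n c z).fderiv]
  simp [smul_smul]

lemma skewΩ (Ω : V →L[ℝ] V →L[ℝ] ℝ) (halt : ∀ x, Ω x x = 0) (x y : V) : Ω x y = -Ω y x := by
  have h := halt (x + y)
  simp only [map_add, ContinuousLinearMap.add_apply, halt] at h
  linarith

lemma key_linear [FiniteDimensional ℝ V]
    (Ω : V →L[ℝ] V →L[ℝ] ℝ) (halt : ∀ x, Ω x x = 0) (hnd : ∀ x, (∀ y, Ω x y = 0) → x = 0)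
    (h : V → V) (hsm : ContDiff ℝ (⊤ : ℕ∞) h)
    (H : ∀ z v, Ω (h z) (fderiv ℝ h z v) = Ω z v) :
    ∃ γ : V →ₗ[ℝ] V, (Function.Bijective γ ∧ ∀ x y, Ω (γ x) (γ y) = Ω x y) ∧ h = ⇑γ := by
  have hskew : ∀ x y : V, Ω x y = -Ω y x := skewΩ Ω halt
  have hd : Differentiable ℝ h := hsm.differentiable (by simp)
  have hd' : ∀ z, HasFDerivAt h (fderiv ℝ h z) z := fun z => (hd z).hasFDerivAt
  have hfd : ContDiff ℝ (⊤ : ℕ∞) (fun z => fderiv ℝ h z) := hsm.fderiv_right (by simp)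
  set D : V → V →L[ℝ] V := fun z => fderiv ℝ h z with hD
  set S : V → V →L[ℝ] V →L[ℝ] V := fun z => fderiv ℝ (fun z => fderiv ℝ h z) z with hS
  have hfd' : ∀ z, HasFDerivAt (fun z => fderiv ℝ h z) (S z) z :=
    fun z => ((hfd.differentiable (by simp)) z).hasFDerivAt
  have hsymmS : ∀ z v w, S z v w = S z w v := fun z v w =>
    second_derivative_symmetric hd' (hfd' z) v w
  have keyE : ∀ z v w, Ω (D z w) (D z v) + Ω (h z) (S z w v) = Ω w v := by
    intro z v w
    have hc : HasFDerivAt (fun y => Ω (h y))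
        ((Ω : V →L[ℝ] V →L[ℝ] ℝ).comp (D z)) z := (Ω.hasFDerivAt).comp z (hd' z)
    have hu : HasFDerivAt (fun y => (D y) v)
        ((D z).comp (0 : V →L[ℝ] V) + (S z).flip v) z :=
      (hfd' z).clm_apply (hasFDerivAt_const v z)
    have hA := hc.clm_apply hu
    have hfun : (fun y => Ω (h y) ((D y) v)) = fun y => Ω.flip v y := by
      funext y; simpa using H y v
    have hB : HasFDerivAt (fun y => Ω (h y) ((D y) v)) (Ω.flip v) z := by
      rw [hfun]; exact (Ω.flip v).hasFDerivAt
    have := hA.unique hB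
    have happ := congrArg (fun (L : V →L[ℝ] ℝ) => L w) this
    simp only [ContinuousLinearMap.add_apply, ContinuousLinearMap.comp_apply,
      ContinuousLinearMap.flip_apply, ContinuousLinearMap.zero_apply, map_zero,
      ContinuousLinearMap.coe_comp', Function.comp_apply, zero_add] at happ
    linarith [happ]
  have hsymp : ∀ z v w, Ω (D z w) (D z v) = Ω w v := by
    intro z v w
    have e1 := keyE z v w
    have e2 := keyE z w v
    rw [hsymmS z v w] at e2
    have hs1 := hskew (D z v) (D z w)
    have hs2 := hskew v w
    linarith
  have hinj : ∀ z, Function.Injective (D z) := by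
    intro z
    have h0 : ∀ u, D z u = 0 → u = 0 := by
      intro u hu
      refine hnd u (fun y => ?_)
      have := hsymp z y u
      rw [hu] at this
      simpa using this.symm
    intro u u' he
    have := h0 (u - u') (by rw [map_sub, he, sub_self])
    exact sub_eq_zero.mp this
  have hsurj : ∀ z, Function.Surjective (D z) := by
    intro z
    exact LinearMap.injective_iff_surjective.mp (show Function.Injective ((D z : V →ₗ[ℝ] V)) from hinj z)
  have heuler : ∀ z, h z = D z z := by
    intro z
    have h0 : ∀ v, Ω (h z - D z z) (D z v) = 0 := by
      intro v
      rw [map_sub, ContinuousLinearMap.sub_apply, H z v, hsymp z v z, sub_self]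
    have h1 : ∀ u, Ω (h z - D z z) u = 0 := by
      intro u
      obtain ⟨v, rfl⟩ := hsurj z u
      exact h0 v
    have := hnd _ h1
    rw [sub_eq_zero] at this
    exact this
  have homog : ∀ z, h z = D 0 z := by
    intro z
    set φ : ℝ → V := fun t => h (t • z) with hφdef
    set ψ : ℝ → V := fun t => D (t • z) z with hψdef
    have hsz : ContDiff ℝ (⊤ : ℕ∞) (fun t : ℝ => t • z) := contDiff_id.smul contDiff_const
    have hφ' : ∀ t, HasDerivAt φ (ψ t) t := by
      intro t
      have h1 : HasDerivAt (fun s : ℝ => s • z) z t := by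
        simpa using (hasDerivAt_id t).smul_const z
      exact (hd' (t • z)).comp_hasDerivAt t h1
    have hψsm : ContDiff ℝ (⊤ : ℕ∞) ψ := (hfd.comp hsz).clm_apply contDiff_const
    have hrel : ∀ t, φ t = t • ψ t := by
      intro t
      have := heuler (t • z)
      simp only [hφdef, hψdef]
      rw [this, map_smul]
    have hψ' : ∀ t, HasDerivAt ψ (deriv ψ t) t :=
      fun t => ((hψsm.differentiable (by simp)) t).hasDerivAt
    have hzero : ∀ t : ℝ, t • deriv ψ t = 0 := by
      intro t
      have h1 : HasDerivAt (fun s => s • ψ s) (t • deriv ψ t + (1:ℝ) • ψ t) t :=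
        (hasDerivAt_id t).smul (hψ' t)
      have h2 : HasDerivAt (fun s => s • ψ s) (ψ t) t := by
        have hfe : φ = fun s => s • ψ s := funext hrel
        rw [← hfe]; exact hφ' t
      have h3 := h1.unique h2
      rw [one_smul] at h3
      exact add_eq_right.mp h3
    have hd0 : ∀ t : ℝ, t ≠ 0 → deriv ψ t = 0 := fun t ht =>
      (smul_eq_zero.mp (hzero t)).resolve_left ht
    have hcont : Continuous (deriv ψ) := hψsm.continuous_deriv (by simp)
    have hderiv0 : (deriv ψ) = fun _ => (0 : V) :=
      Continuous.ext_on (dense_compl_singleton (0:ℝ)) hcont continuous_const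
        (fun t ht => hd0 t ht)
    have hconst : ψ 1 = ψ 0 :=
      is_const_of_deriv_eq_zero (hψsm.differentiable (by simp))
        (fun t => by rw [hderiv0]) 1 0
    calc h z = φ 1 := by simp [hφdef]
      _ = (1:ℝ) • ψ 1 := hrel 1
      _ = ψ 0 := by rw [one_smul, hconst]
      _ = D 0 z := by simp [hψdef]
  refine ⟨((D 0 : V →L[ℝ] V) : V →ₗ[ℝ] V), ⟨⟨hinj 0, hsurj 0⟩, fun x y => hsymp 0 y x⟩,
    funext homog⟩

lemma omega_expand (Ω : V →L[ℝ] V →L[ℝ] ℝ) (halt : ∀ x, Ω x x = 0) (a z v : V) (s k : ℝ) :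
    Ω (z + s • a) (v + k • a) = Ω z v - k * Ω a z + s * Ω a v := by
  have h1 : Ω z a = -Ω a z := skewΩ Ω halt z a
  simp only [map_add, map_smul, ContinuousLinearMap.add_apply, ContinuousLinearMap.smul_apply,
    smul_eq_mul, halt, h1]
  ring

lemma contDiff_F (Ω : V →L[ℝ] V →L[ℝ] ℝ) (a : V) (n : ℕ) (c : ℝ) :
    ContDiff ℝ (⊤ : ℕ∞) (fun z : V => z + (c * (Ω a z) ^ (n + 1)) • a) :=
  contDiff_id.add ((contDiff_const.mul ((Ω a).contDiff.pow (n + 1))).smul contDiff_const)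

lemma lam_F (Ω : V →L[ℝ] V →L[ℝ] ℝ) (halt : ∀ x, Ω x x = 0) (a z : V) (s : ℝ) :
    Ω a (z + s • a) = Ω a z := by
  simp [map_add, map_smul, halt]

lemma F_comp (Ω : V →L[ℝ] V →L[ℝ] ℝ) (halt : ∀ x, Ω x x = 0) (a : V) (n : ℕ) (c : ℝ) (z : V) :
    (z + ((-c) * (Ω a z) ^ (n + 1)) • a)
      + (c * (Ω a (z + ((-c) * (Ω a z) ^ (n + 1)) • a)) ^ (n + 1)) • a = z := by
  rw [lam_F Ω halt, add_assoc, ← add_smul]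
  simp

lemma pull_a (Ω : V →L[ℝ] V →L[ℝ] ℝ) (halt : ∀ x, Ω x x = 0) (a : V) (n : ℕ)
    (c : ℝ) (hc : c * (n : ℝ) = 1) (z v : V) :
    Ω ((z + (c * (Ω a z) ^ (n + 1)) • a)
        + (Ω a (z + (c * (Ω a z) ^ (n + 1)) • a)) ^ (n + 1) • a)
      (fderiv ℝ (fun z : V => z + (c * (Ω a z) ^ (n + 1)) • a) z v) = Ω z v := by
  rw [fderiv_F, lam_F Ω halt, add_assoc, ← add_smul, omega_expand Ω halt]
  linear_combination (-((Ω a z) ^ n * Ω a z * Ω a v)) * hc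

lemma pull_0 (Ω : V →L[ℝ] V →L[ℝ] ℝ) (halt : ∀ x, Ω x x = 0) (a : V) (n : ℕ)
    (c : ℝ) (hc : c * (n : ℝ) = -1) (z v : V) :
    Ω (z + (c * (Ω a z) ^ (n + 1)) • a)
      (fderiv ℝ (fun z : V => z + (c * (Ω a z) ^ (n + 1)) • a) z v)
      = Ω (z + (Ω a z) ^ (n + 1) • a) v := by
  rw [fderiv_F, omega_expand Ω halt]
  simp only [map_add, map_smul, ContinuousLinearMap.add_apply, ContinuousLinearMap.smul_apply,
    smul_eq_mul]
  linear_combination (-((Ω a z) ^ n * Ω a z * Ω a v)) * hc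

/-- The shear map `f_c(z) = z + c·Ω(a,z)^{n+1}·a`. -/
noncomputable def Fmap (Ω : V →L[ℝ] V →L[ℝ] ℝ) (a : V) (n : ℕ) (c : ℝ) : V → V :=
  fun z : V => z + (c * (Ω a z) ^ (n + 1)) • a

lemma hasF (Ω : V →L[ℝ] V →L[ℝ] ℝ) (a : V) (n : ℕ) (c : ℝ) (z : V) :
    HasFDerivAt (Fmap Ω a n c)
      (ContinuousLinearMap.id ℝ V + (c * (n+1) * (Ω a z) ^ n) • (Ω a).smulRight a) z :=
  hasFDerivAt_F Ω a n c z

lemma contF (Ω : V →L[ℝ] V →L[ℝ] ℝ) (a : V) (n : ℕ) (c : ℝ) :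
    ContDiff ℝ (⊤ : ℕ∞) (Fmap Ω a n c) :=
  contDiff_F Ω a n c

lemma Fcomp (Ω : V →L[ℝ] V →L[ℝ] ℝ) (halt : ∀ x, Ω x x = 0) (a : V) (n : ℕ) (c : ℝ) (z : V) :
    Fmap Ω a n c (Fmap Ω a n (-c) z) = z :=
  F_comp Ω halt a n c z

lemma pullA (Ω : V →L[ℝ] V →L[ℝ] ℝ) (halt : ∀ x, Ω x x = 0) (a : V) (n : ℕ)
    (c : ℝ) (hc : c * (n : ℝ) = 1) (z v : V) :
    Ω (Fmap Ω a n c z + (Ω a (Fmap Ω a n c z)) ^ (n + 1) • a)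
      (fderiv ℝ (Fmap Ω a n c) z v) = Ω z v :=
  pull_a Ω halt a n c hc z v

lemma pull0 (Ω : V →L[ℝ] V →L[ℝ] ℝ) (halt : ∀ x, Ω x x = 0) (a : V) (n : ℕ)
    (c : ℝ) (hc : c * (n : ℝ) = -1) (z v : V) :
    Ω (Fmap Ω a n c z) (fderiv ℝ (Fmap Ω a n c) z v)
      = Ω (z + (Ω a z) ^ (n + 1) • a) v :=
  pull_0 Ω halt a n c hc z v

end Stmt18Aux


/-- higher-degree case: a smooth map g satisfies g*θᵃ = θᵃ,
with θᵃ_z(v) = (1/2)Ω(z + Ω(a,z)^{n+1}a, v), iff g = f_a ∘ γ ∘ f_a⁻¹ for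
some γ ∈ Sp(V, Ω), where f_a(z) = z + (1/n)Ω(a,z)^{n+1}a and
f_a⁻¹(z) = z − (1/n)Ω(a,z)^{n+1}a. -/
theorem stmt18 {V : Type*} [NormedAddCommGroup V] [NormedSpace ℝ V]
    [FiniteDimensional ℝ V]
    (Ω : V →L[ℝ] V →L[ℝ] ℝ)
    (halt : ∀ x, Ω x x = 0)
    (hnd : ∀ x, (∀ y, Ω x y = 0) → x = 0)
    (a : V) (n : ℕ) (hn : 1 ≤ n)
    (g : V → V) (hg : ContDiff ℝ (⊤ : ℕ∞) g) :
    (∀ z v : V,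
        Ω (g z + (Ω a (g z)) ^ (n + 1) • a) (fderiv ℝ g z v)
          = Ω (z + (Ω a z) ^ (n + 1) • a) v) ↔
      ∃ γ : V →ₗ[ℝ] V, IsLinSymp Ω γ ∧
        g = (fun z : V => z + (((1 : ℝ)/n) * (Ω a z) ^ (n + 1)) • a) ∘ γ ∘
            (fun z : V => z - (((1 : ℝ)/n) * (Ω a z) ^ (n + 1)) • a) := by
  have hn0 : (n : ℝ) ≠ 0 := Nat.cast_ne_zero.mpr (by omega)
  have hc : ((1:ℝ)/n) * (n : ℝ) = 1 := by field_simp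
  have hc' : (-((1:ℝ)/n)) * (n : ℝ) = -1 := by rw [neg_mul, hc]
  have hF : (fun z : V => z + (((1 : ℝ)/n) * (Ω a z) ^ (n + 1)) • a)
      = Fmap Ω a n ((1:ℝ)/n) := rfl
  have hFi : (fun z : V => z - (((1 : ℝ)/n) * (Ω a z) ^ (n + 1)) • a)
      = Fmap Ω a n (-((1:ℝ)/n)) := by
    funext z
    show _ = z + _ • a
    rw [sub_eq_add_neg, ← neg_smul, ← neg_mul]
  rw [hF, hFi]
  constructor
  · -- forward
    intro H
    have hsmh : ContDiff ℝ (⊤ : ℕ∞) (Fmap Ω a n (-((1:ℝ)/n)) ∘ g ∘ Fmap Ω a n ((1:ℝ)/n)) :=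
      (contF Ω a n (-((1:ℝ)/n))).comp (hg.comp (contF Ω a n ((1:ℝ)/n)))
    have HQ : ∀ z v, Ω ((Fmap Ω a n (-((1:ℝ)/n)) ∘ g ∘ Fmap Ω a n ((1:ℝ)/n)) z)
        (fderiv ℝ (Fmap Ω a n (-((1:ℝ)/n)) ∘ g ∘ Fmap Ω a n ((1:ℝ)/n)) z v) = Ω z v := by
      intro z v
      have hDF := hasF Ω a n ((1:ℝ)/n) z
      have hDg : HasFDerivAt g (fderiv ℝ g (Fmap Ω a n ((1:ℝ)/n) z)) (Fmap Ω a n ((1:ℝ)/n) z) :=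
        (hg.differentiable (by simp) (Fmap Ω a n ((1:ℝ)/n) z)).hasFDerivAt
      have hDFi := hasF Ω a n (-((1:ℝ)/n)) (g (Fmap Ω a n ((1:ℝ)/n) z))
      have hcomp := hDFi.comp z (hDg.comp z hDF)
      rw [hcomp.fderiv]
      simp only [Function.comp_apply, ContinuousLinearMap.comp_apply]
      rw [← hDFi.fderiv, ← hDF.fderiv]
      rw [pull0 Ω halt a n (-((1:ℝ)/n)) hc']
      rw [H (Fmap Ω a n ((1:ℝ)/n) z) (fderiv ℝ (Fmap Ω a n ((1:ℝ)/n)) z v)]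
      exact pullA Ω halt a n ((1:ℝ)/n) hc z v
    obtain ⟨γ, hγ, hγeq⟩ := key_linear Ω halt hnd _ hsmh HQ
    refine ⟨γ, hγ, ?_⟩
    funext z
    show g z = Fmap Ω a n ((1:ℝ)/n) (γ (Fmap Ω a n (-((1:ℝ)/n)) z))
    rw [← hγeq]
    show g z = Fmap Ω a n ((1:ℝ)/n)
      (Fmap Ω a n (-((1:ℝ)/n)) (g (Fmap Ω a n ((1:ℝ)/n) (Fmap Ω a n (-((1:ℝ)/n)) z))))
    rw [Fcomp Ω halt a n ((1:ℝ)/n), Fcomp Ω halt a n ((1:ℝ)/n)]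
  · -- backward
    rintro ⟨γ, ⟨hγbij, hγsymp⟩, hgeq⟩
    intro z v
    subst hgeq
    rw [show (⇑γ : V → V) = ⇑(LinearMap.toContinuousLinearMap γ) from
      (LinearMap.coe_toContinuousLinearMap' γ).symm]
    set γc := LinearMap.toContinuousLinearMap γ with hγc
    have hDFi := hasF Ω a n (-((1:ℝ)/n)) z
    have hDγ : HasFDerivAt (⇑γc) γc (Fmap Ω a n (-((1:ℝ)/n)) z) := γc.hasFDerivAt
    have hDF := hasF Ω a n ((1:ℝ)/n) (γc (Fmap Ω a n (-((1:ℝ)/n)) z))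
    have hcomp := hDF.comp z (hDγ.comp z hDFi)
    rw [hcomp.fderiv]
    simp only [Function.comp_apply, ContinuousLinearMap.comp_apply]
    rw [← hDF.fderiv, ← hDFi.fderiv]
    rw [pullA Ω halt a n ((1:ℝ)/n) hc]
    have hs : Ω (γc (Fmap Ω a n (-((1:ℝ)/n)) z)) (γc (fderiv ℝ (Fmap Ω a n (-((1:ℝ)/n))) z v))
        = Ω (Fmap Ω a n (-((1:ℝ)/n)) z) (fderiv ℝ (Fmap Ω a n (-((1:ℝ)/n))) z v) :=
      hγsymp _ _
    rw [hs]
    exact pull0 Ω halt a n (-((1:ℝ)/n)) hc' z v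
end
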